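/- Let P be a Poisson n-Lie algebra over a field F, a ∈ P, and λ ∈ F. Then the generalized eigenspace P_{a,λ} = {x ∈ P : (P_a − λ·id)^k(x) = 0 for some k ∈ ℕ} is an ideal of P: it is closed under multiplication by elements of P and satisfies [P_{a,λ}, P, …, P] ⊆ P_{a,λ}. -/

import Mathlib

/-!
Multiplication by any `p` commutes with `P_a`, so it preserves every generalized eigenspace of
`P_a`. For `Q_y = [·, y₁, …, y_{n-1}]` the Leibniz rule gives `[P_a, Q_y] = -P_{Q_y(a)}`, which
still commutes with `P_a`; hence
`(P_a - λ)^{k+1} Q_y = Q_y (P_a - λ)^{k+1} - (k+1) P_{Q_y(a)} (P_a - λ)^k`,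
and `Q_y` maps `ker (P_a - λ)^k` into `ker (P_a - λ)^{k+1}`.
-/

open Module.End Set

theorem pow_succ_mul_eq_mul_pow_succ_add {R : Type*} [Ring R] {a b : R}
    (h : Commute a (a * b - b * a)) (n : ℕ) :
    a ^ (n + 1) * b = b * a ^ (n + 1) + (n + 1) • ((a * b - b * a) * a ^ n) := by
  set c := a * b - b * a with hc
  have hab : a * b = b * a + c := by rw [hc]; abel
  induction n with
  | zero => simp [hab]
  | succ n ih =>
    calc a ^ (n + 1 + 1) * b = a * (a ^ (n + 1) * b) := by rw [pow_succ', mul_assoc]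
      _ = a * b * a ^ (n + 1) + (n + 1) • (a * c * a ^ n) := by
        rw [ih, mul_add, mul_smul_comm, ← mul_assoc, ← mul_assoc]
      _ = b * a ^ (n + 1 + 1) + (n + 1 + 1) • (c * a ^ (n + 1)) := by
        rw [hab, h.eq, add_mul, mul_assoc, mul_assoc, ← pow_succ', ← pow_succ',
          succ_nsmul _ (n + 1), add_assoc, add_comm (c * _)]

namespace Module.End

variable {R M : Type*} [CommRing R] [AddCommGroup M] [Module R M]

theorem mapsTo_maxGenEigenspace_of_commute_commutator {f g : End R M}
    (h : Commute f (f * g - g * f)) (μ : R) :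
    MapsTo g (f.maxGenEigenspace μ) (f.maxGenEigenspace μ) := by
  intro x hx
  rw [SetLike.mem_coe, mem_maxGenEigenspace] at hx ⊢
  obtain ⟨k, hk⟩ := hx
  set T := f - μ • (1 : End R M)
  have hTg : T * g - g * T = f * g - g * f := by
    simp only [T, sub_mul, mul_sub, smul_mul_assoc, mul_smul_comm, one_mul, mul_one]
    abel
  have hT : Commute T (T * g - g * T) :=
    hTg ▸ h.sub_left ((Commute.one_left _).smul_left μ)
  refine ⟨k + 1, ?_⟩
  rw [← mul_apply, pow_succ_mul_eq_mul_pow_succ_add hT, LinearMap.add_apply, mul_apply,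
    pow_succ', mul_apply, hk, map_zero, map_zero, LinearMap.smul_apply, mul_apply, hk]
  simp

end Module.End

theorem LinearMap.commute_mulLeft {R A : Type*} [CommSemiring R] [CommSemiring A] [Algebra R A]
    (a b : A) : Commute (mulLeft R a) (mulLeft R b) := by
  ext c
  exact mul_left_comm a b c

theorem AlternatingMap.map_snoc {R M N : Type*} [Semiring R] [AddCommGroup M] [Module R M]
    [AddCommGroup N] [Module R N] {n : ℕ} (f : M [⋀^Fin (n + 1)]→ₗ[R] N) (y : Fin n → M)
    (x : M) :
    f (Fin.snoc y x) = Equiv.Perm.sign (finRotate (n + 1)) • f (Fin.cons x y) := by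
  rw [Fin.snoc_eq_cons_rotate, ← Function.comp_def, f.map_perm]

section PoissonBracket

variable {R A : Type*} [CommRing R] [CommRing A] [Algebra R A] {n : ℕ}
  (br : A [⋀^Fin (n + 1)]→ₗ[R] A)

theorem commutator_mulLeft_bracket_cons
    (hLeib : ∀ (u v : A) (y : Fin n → A),
      br (Fin.cons (u * v) y) = u * br (Fin.cons v y) + v * br (Fin.cons u y))
    (a : A) (y : Fin n → A) :
    LinearMap.mulLeft R a * br.toMultilinearMap.toLinearMap (Fin.cons 0 y) 0 -
        br.toMultilinearMap.toLinearMap (Fin.cons 0 y) 0 * LinearMap.mulLeft R a =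
      -LinearMap.mulLeft R (br (Fin.cons a y)) := by
  ext z
  simp only [LinearMap.sub_apply, mul_apply, LinearMap.neg_apply, LinearMap.mulLeft_apply,
    MultilinearMap.toLinearMap_apply, Fin.update_cons_zero, AlternatingMap.coe_multilinearMap,
    hLeib]
  ring

theorem bracket_cons_mem_maxGenEigenspace_mulLeft
    (hLeib : ∀ (u v : A) (y : Fin n → A),
      br (Fin.cons (u * v) y) = u * br (Fin.cons v y) + v * br (Fin.cons u y))
    (a : A) (μ : R) {x : A} (hx : x ∈ maxGenEigenspace (LinearMap.mulLeft R a) μ)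
    (y : Fin n → A) :
    br (Fin.cons x y) ∈ maxGenEigenspace (LinearMap.mulLeft R a) μ := by
  have hcomm : Commute (LinearMap.mulLeft R a)
      (LinearMap.mulLeft R a * br.toMultilinearMap.toLinearMap (Fin.cons 0 y) 0 -
        br.toMultilinearMap.toLinearMap (Fin.cons 0 y) 0 * LinearMap.mulLeft R a) := by
    rw [commutator_mulLeft_bracket_cons br hLeib]
    exact (LinearMap.commute_mulLeft (R := R) a _).neg_right
  simpa using mapsTo_maxGenEigenspace_of_commute_commutator hcomm μ hx

end PoissonBracket

theorem generalized_eigenspace_is_ideal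
    (F P : Type*) [Field F] [CommRing P] [Algebra F P] (m : ℕ)
    (br : AlternatingMap F P P (Fin (m + 2)))
    (hLeib : ∀ (u v : P) (x : Fin (m + 1) → P),
      br (Fin.cons (u * v) x) = u * br (Fin.cons v x) + v * br (Fin.cons u x))
    (a : P) (lam : F) :
    ∃ S : Submodule F P,
      (∀ x : P, x ∈ S ↔ ∃ k : ℕ,
        (((LinearMap.mulLeft F a - lam • LinearMap.id : P →ₗ[F] P)) ^ k) x = 0) ∧
      (∀ x ∈ S, ∀ p : P, p * x ∈ S) ∧
      (∀ x ∈ S, ∀ y : Fin (m + 1) → P, br (Fin.snoc y x) ∈ S) := by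
  refine ⟨maxGenEigenspace (LinearMap.mulLeft F a) lam, fun x => ?_, fun x hx p => ?_,
    fun x hx y => ?_⟩
  · rw [mem_maxGenEigenspace, one_eq_id]
  · exact mapsTo_maxGenEigenspace_of_comm (LinearMap.commute_mulLeft a p) lam hx
  · rw [br.map_snoc]
    exact Submodule.smul_of_tower_mem _ _
      (bracket_cons_mem_maxGenEigenspace_mulLeft br hLeib a lam hx y)
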